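/- arXiv:1704.06596 — 2 statements merged into one kernel-verified Lean document; each statement's English description precedes it below -/
import Mathlib

section
/- The operator A = ∂_x (x^3+x^2) ∂_x^3 factorizes as A = x^{-2} (D-1)^2 (D-2) B, where B := x(D-2) + D, and moreover B = (x+1)^3 D (x+1)^{-2} as operators on smooth functions on (0,∞). -/
/-- The first-order operator `D - c`, where `D = x ∂ₓ`. -/
noncomputable def Sop (c : ℝ) (f : ℝ → ℝ) : ℝ → ℝ := fun x => x * deriv f x - c * f x

/-- The operator `A = ∂ₓ (x³+x²) ∂ₓ³`. -/
noncomputable def Aop (f : ℝ → ℝ) : ℝ → ℝ :=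
  fun x => deriv (fun y => (y ^ 3 + y ^ 2) * deriv (deriv (deriv f)) y) x

/-- The operator `B = x(D-2) + D`. -/
noncomputable def Bop (f : ℝ → ℝ) : ℝ → ℝ :=
  fun x => x * (x * deriv f x - 2 * f x) + x * deriv f x

/-- `A = x⁻² (D-1)² (D-2) B` and `B = (x+1)³ D (x+1)⁻²` on smooth functions on `(0,∞)`. -/
theorem stmt_4 (f : ℝ → ℝ) (hf : ContDiffOn ℝ (⊤ : ℕ∞) f (Set.Ioi 0)) :
    ∀ x : ℝ, 0 < x →
      Aop f x = (x ^ 2)⁻¹ * Sop 1 (Sop 1 (Sop 2 (Bop f))) x ∧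
      Bop f x = (x + 1) ^ 3 * (x * deriv (fun y => ((y + 1) ^ 2)⁻¹ * f y) x) := by
  have ho : IsOpen (Set.Ioi (0:ℝ)) := isOpen_Ioi
  have h1 : ContDiffOn ℝ (⊤ : ℕ∞) (deriv f) (Set.Ioi 0) := hf.deriv_of_isOpen ho (by simp)
  have h2 : ContDiffOn ℝ (⊤ : ℕ∞) (deriv (deriv f)) (Set.Ioi 0) := h1.deriv_of_isOpen ho (by simp)
  have h3 : ContDiffOn ℝ (⊤ : ℕ∞) (deriv (deriv (deriv f))) (Set.Ioi 0) :=
    h2.deriv_of_isOpen ho (by simp)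
  have df : ∀ x ∈ Set.Ioi (0:ℝ), DifferentiableAt ℝ f x := fun x hx =>
    (hf.contDiffAt (ho.mem_nhds hx)).differentiableAt (by simp)
  have df1 : ∀ x ∈ Set.Ioi (0:ℝ), DifferentiableAt ℝ (deriv f) x := fun x hx =>
    (h1.contDiffAt (ho.mem_nhds hx)).differentiableAt (by simp)
  have df2 : ∀ x ∈ Set.Ioi (0:ℝ), DifferentiableAt ℝ (deriv (deriv f)) x := fun x hx =>
    (h2.contDiffAt (ho.mem_nhds hx)).differentiableAt (by simp)
  have df3 : ∀ x ∈ Set.Ioi (0:ℝ), DifferentiableAt ℝ (deriv (deriv (deriv f))) x := fun x hx =>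
    (h3.contDiffAt (ho.mem_nhds hx)).differentiableAt (by simp)
  -- Stage 1: `Bop f` as an explicit function (everywhere).
  have hB : Bop f = fun y => -2*y*f y + (y + y*y) * deriv f y := by
    funext y; simp only [Bop]; ring
  -- Stage 2: `Sop 2 (Bop f)` on `Ioi 0`.
  have hC : ∀ x ∈ Set.Ioi (0:ℝ), Sop 2 (Bop f) x =
      2*x*f x + (-x - 2*(x*x)) * deriv f x + (x*x + x*x*x) * deriv (deriv f) x := by
    intro x hx
    have Hf := (df x hx).hasDerivAt
    have Hf1 := (df1 x hx).hasDerivAt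
    have H : HasDerivAt (fun y => -2*y*f y + (y + y*y) * deriv f y)
        (-2*f x + (-2*x)*deriv f x + ((1 + 2*x)*deriv f x + (x + x*x)*deriv (deriv f) x)) x := by
      have h := (((hasDerivAt_id x).const_mul (-2:ℝ)).mul Hf).add
        (((hasDerivAt_id x).add ((hasDerivAt_id x).mul (hasDerivAt_id x))).mul Hf1)
      refine h.congr_deriv ?_
      simp only [id_eq, Pi.add_apply, Pi.mul_apply, Pi.neg_apply, Pi.sub_apply]; ring
    simp only [Sop, hB, H.deriv]; ring
  -- Stage 3: `Sop 1 (Sop 2 (Bop f))` on `Ioi 0`.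
  have hD : ∀ x ∈ Set.Ioi (0:ℝ), Sop 1 (Sop 2 (Bop f)) x =
      (x*x*x + x*x*x*x) * deriv (deriv (deriv f)) x := by
    intro x hx
    have Hf := (df x hx).hasDerivAt
    have Hf1 := (df1 x hx).hasDerivAt
    have Hf2 := (df2 x hx).hasDerivAt
    have hev : Sop 2 (Bop f) =ᶠ[nhds x]
        (fun y => 2*y*f y + (-y - 2*(y*y)) * deriv f y + (y*y + y*y*y) * deriv (deriv f) y) :=
      Filter.eventuallyEq_of_mem (ho.mem_nhds hx) hC
    have H : HasDerivAt
        (fun y => 2*y*f y + (-y - 2*(y*y)) * deriv f y + (y*y + y*y*y) * deriv (deriv f) y)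
        (2*f x + 2*x*deriv f x + ((-1 - 4*x)*deriv f x + (-x - 2*(x*x))*deriv (deriv f) x)
          + ((2*x + 3*(x*x))*deriv (deriv f) x + (x*x + x*x*x)*deriv (deriv (deriv f)) x)) x := by
      have h := ((((hasDerivAt_id x).const_mul (2:ℝ)).mul Hf).add
        ((((hasDerivAt_id x).neg).sub
          (((hasDerivAt_id x).mul (hasDerivAt_id x)).const_mul (2:ℝ))).mul Hf1)).add
        ((((hasDerivAt_id x).mul (hasDerivAt_id x)).add
          (((hasDerivAt_id x).mul (hasDerivAt_id x)).mul (hasDerivAt_id x))).mul Hf2)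
      refine h.congr_deriv ?_
      simp only [id_eq, Pi.add_apply, Pi.mul_apply, Pi.neg_apply, Pi.sub_apply]; ring
    rw [show Sop 1 (Sop 2 (Bop f)) x = x * deriv (Sop 2 (Bop f)) x - 1 * Sop 2 (Bop f) x from rfl,
      hev.deriv_eq, H.deriv, hC x hx]; ring
  -- First identity.
  intro x hx
  have hx0 : x ≠ 0 := ne_of_gt hx
  constructor
  · -- value of the outermost `Sop 1`
    have Hf3 := (df3 x hx).hasDerivAt
    have hev : Sop 1 (Sop 2 (Bop f)) =ᶠ[nhds x]
        (fun y => (y*y*y + y*y*y*y) * deriv (deriv (deriv f)) y) :=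
      Filter.eventuallyEq_of_mem (ho.mem_nhds hx) hD
    have H : HasDerivAt (fun y => (y*y*y + y*y*y*y) * deriv (deriv (deriv f)) y)
        ((3*(x*x) + 4*(x*x*x)) * deriv (deriv (deriv f)) x
          + (x*x*x + x*x*x*x) * deriv (deriv (deriv (deriv f))) x) x := by
      have h := ((((hasDerivAt_id x).mul (hasDerivAt_id x)).mul (hasDerivAt_id x)).add
        ((((hasDerivAt_id x).mul (hasDerivAt_id x)).mul (hasDerivAt_id x)).mul
          (hasDerivAt_id x))).mul Hf3
      refine h.congr_deriv ?_
      simp only [id_eq, Pi.add_apply, Pi.mul_apply, Pi.neg_apply, Pi.sub_apply]; ring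
    have hE : Sop 1 (Sop 1 (Sop 2 (Bop f))) x =
        (2*(x*x*x) + 3*(x*x*x*x)) * deriv (deriv (deriv f)) x
          + (x*x*x*x + x*x*x*x*x) * deriv (deriv (deriv (deriv f))) x := by
      rw [show Sop 1 (Sop 1 (Sop 2 (Bop f))) x
        = x * deriv (Sop 1 (Sop 2 (Bop f))) x - 1 * Sop 1 (Sop 2 (Bop f)) x from rfl,
      hev.deriv_eq, H.deriv, hD x hx]; ring
    have hA : Aop f x = (3*(x*x) + 2*x) * deriv (deriv (deriv f)) x
        + (x*x*x + x*x) * deriv (deriv (deriv (deriv f))) x := by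
      have h := ((hasDerivAt_pow 3 x).add (hasDerivAt_pow 2 x)).mul (df3 x hx).hasDerivAt
      have H' : HasDerivAt (fun y => (y ^ 3 + y ^ 2) * deriv (deriv (deriv f)) y)
          ((3*(x*x) + 2*x) * deriv (deriv (deriv f)) x
            + (x*x*x + x*x) * deriv (deriv (deriv (deriv f))) x) x := by
        refine h.congr_deriv ?_
        simp only [Pi.add_apply]
        push_cast
        ring
      simpa only [Aop] using H'.deriv
    rw [hA, hE]
    field_simp
    ring
  · -- second identity
    have Hf := (df x hx).hasDerivAt
    have hne : ((x+1)^2 : ℝ) ≠ 0 := by positivity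
    have Hg : HasDerivAt (fun y => ((y + 1) ^ 2)⁻¹ * f y)
        (-(2*(x+1)) / ((x+1)^2)^2 * f x + ((x+1)^2)⁻¹ * deriv f x) x := by
      have hg : HasDerivAt (fun y : ℝ => (y + 1) ^ 2) (2*(x+1)) x := by
        have := ((hasDerivAt_id x).add_const (1:ℝ)).pow 2
        refine this.congr_deriv ?_
        simp only [id_eq]; push_cast; ring
      exact (hg.inv hne).mul Hf
    rw [Hg.deriv]
    simp only [Bop]
    field_simp
    ring
end

section
/- For each k ∈ ℕ, the operator A_k defined by ∂_x^k A = A_k ∂_x^k, where A = ∂_x(x^3+x^2)∂_x^3, is given by A_k = x^{-1} p_k(D) + x^{-2} q_k(D) with p_k(ζ) = ζ(ζ+k)(ζ-(1-k))(ζ-(2-k)) and q_k(ζ) = ζ(ζ-1)(ζ-(1-k))(ζ-(2-k)). -/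
open Set

lemma smooth_deriv {g : ℝ → ℝ} (hg : ContDiffOn ℝ (⊤ : ℕ∞) g (Set.Ioi 0)) :
    ContDiffOn ℝ (⊤ : ℕ∞) (deriv g) (Set.Ioi 0) := hg.deriv_of_isOpen isOpen_Ioi (by simp)

lemma smooth_iD {f : ℝ → ℝ} (hf : ContDiffOn ℝ (⊤ : ℕ∞) f (Set.Ioi 0)) (n : ℕ) :
    ContDiffOn ℝ (⊤ : ℕ∞) (iteratedDeriv n f) (Set.Ioi 0) := by
  induction n with
  | zero => simpa [iteratedDeriv_zero] using hf
  | succ n ih => rw [iteratedDeriv_succ]; exact smooth_deriv ih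

lemma smooth_Sop (c : ℝ) {g : ℝ → ℝ} (hg : ContDiffOn ℝ (⊤ : ℕ∞) g (Set.Ioi 0)) :
    ContDiffOn ℝ (⊤ : ℕ∞) (Sop c g) (Set.Ioi 0) := by
  unfold Sop
  exact (contDiffOn_id.mul (smooth_deriv hg)).sub (contDiffOn_const.mul hg)

lemma dAt {g : ℝ → ℝ} (hg : ContDiffOn ℝ (⊤ : ℕ∞) g (Set.Ioi 0)) {x : ℝ} (hx : 0 < x) :
    DifferentiableAt ℝ g x :=
  (hg.contDiffAt (isOpen_Ioi.mem_nhds hx)).differentiableAt (by simp)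

lemma hD {g : ℝ → ℝ} (hg : ContDiffOn ℝ (⊤ : ℕ∞) g (Set.Ioi 0)) (n : ℕ) (x : ℝ) (hx : 0 < x) :
    HasDerivAt (iteratedDeriv n g) (iteratedDeriv (n + 1) g x) x := by
  rw [iteratedDeriv_succ]
  exact (dAt (smooth_iD hg n) hx).hasDerivAt

lemma iD_iD (m n : ℕ) (f : ℝ → ℝ) :
    iteratedDeriv m (iteratedDeriv n f) = iteratedDeriv (n + m) f := by
  simp only [iteratedDeriv_eq_iterate]
  rw [Nat.add_comm, Function.iterate_add_apply]

lemma Sop_val (a : ℝ) (G : ℝ → ℝ) (x : ℝ) :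
    Sop a G x = x * iteratedDeriv 1 G x - a * G x := by
  simp [Sop, iteratedDeriv_one]

lemma L {g : ℝ → ℝ} (hg : ContDiffOn ℝ (⊤ : ℕ∞) g (Set.Ioi 0)) :
    ∀ (c : ℝ) (j : ℕ) (x : ℝ), 0 < x →
      iteratedDeriv j (Sop c g) x
        = ((j : ℝ) - c) * iteratedDeriv j g x + x * iteratedDeriv (j + 1) g x := by
  intro c j
  induction j with
  | zero =>
    intro x hx
    simp [Sop, iteratedDeriv_zero, iteratedDeriv_one]
    ring
  | succ j ih =>
    intro x hx
    have hev : iteratedDeriv j (Sop c g) =ᶠ[nhds x]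
        fun y => ((j : ℝ) - c) * iteratedDeriv j g y + y * iteratedDeriv (j + 1) g y :=
      Filter.eventuallyEq_of_mem (isOpen_Ioi.mem_nhds hx) (fun y hy => ih y hy)
    rw [iteratedDeriv_succ, hev.deriv_eq]
    have h1 : HasDerivAt
        (fun y => ((j : ℝ) - c) * iteratedDeriv j g y + y * iteratedDeriv (j + 1) g y)
        (((j : ℝ) - c) * iteratedDeriv (j + 1) g x
          + (1 * iteratedDeriv (j + 1) g x + x * iteratedDeriv (j + 1 + 1) g x)) x :=
      (HasDerivAt.const_mul _ (hD hg j x hx)).add ((hasDerivAt_id x).mul (hD hg (j + 1) x hx))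
    rw [h1.deriv]
    push_cast
    ring

/-- `∂ₓᵏ A = A_k ∂ₓᵏ` with `A_k = x⁻¹ p_k(D) + x⁻² q_k(D)`, where
`p_k(ζ) = ζ(ζ+k)(ζ-(1-k))(ζ-(2-k))` and `q_k(ζ) = ζ(ζ-1)(ζ-(1-k))(ζ-(2-k))`. -/
theorem stmt_13 (k : ℕ) (f : ℝ → ℝ) (hf : ContDiffOn ℝ (⊤ : ℕ∞) f (Set.Ioi 0)) :
    ∀ x : ℝ, 0 < x →
      iteratedDeriv k (Aop f) x =
        x⁻¹ * Sop 0 (Sop (-(k : ℝ))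
            (Sop (1 - (k : ℝ)) (Sop (2 - (k : ℝ)) (iteratedDeriv k f)))) x +
        (x ^ 2)⁻¹ * Sop 0 (Sop 1
            (Sop (1 - (k : ℝ)) (Sop (2 - (k : ℝ)) (iteratedDeriv k f)))) x := by
  induction k with
  | zero =>
    intro x hx
    have h3 : deriv (deriv (deriv f)) = iteratedDeriv 3 f := by
      rw [show (3:ℕ) = 2 + 1 from rfl, iteratedDeriv_succ,
        show (2:ℕ) = 1 + 1 from rfl, iteratedDeriv_succ, iteratedDeriv_one]
    have hp : HasDerivAt (fun y : ℝ => y ^ 3 + y ^ 2) (3 * x ^ 2 + 2 * x) x := by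
      have h := (hasDerivAt_pow 3 x).add (hasDerivAt_pow 2 x)
      norm_num at h
      exact h
    have hmul : HasDerivAt (fun y => (y ^ 3 + y ^ 2) * iteratedDeriv 3 f y)
        ((3 * x ^ 2 + 2 * x) * iteratedDeriv 3 f x
          + (x ^ 3 + x ^ 2) * iteratedDeriv (3 + 1) f x) x :=
      hp.mul (hD hf 3 x hx)
    have hs1 := smooth_iD hf 0
    have hs2 := smooth_Sop (2 - ((0:ℕ):ℝ)) hs1
    have hs3 := smooth_Sop (1 - ((0:ℕ):ℝ)) hs2
    have hs4 := smooth_Sop (-((0:ℕ):ℝ)) hs3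
    have hs4' := smooth_Sop 1 hs3
    rw [iteratedDeriv_zero]
    show deriv (fun y => (y ^ 3 + y ^ 2) * deriv (deriv (deriv f)) y) x = _
    simp only [h3]
    rw [hmul.deriv]
    simp only [Sop_val, L hs1, L hs2, L hs3, L hs4, L hs4', iD_iD, hx]
    norm_num [Nat.add_assoc]
    field_simp
    ring
  | succ k ih =>
    intro x hx
    have hs1 := smooth_iD hf k
    have hs2 := smooth_Sop (2 - (k:ℝ)) hs1
    have hs3 := smooth_Sop (1 - (k:ℝ)) hs2
    have hs4 := smooth_Sop (-(k:ℝ)) hs3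
    have hs4' := smooth_Sop 1 hs3
    have ht1 := smooth_iD hf (k + 1)
    have ht2 := smooth_Sop (2 - ((k+1:ℕ):ℝ)) ht1
    have ht3 := smooth_Sop (1 - ((k+1:ℕ):ℝ)) ht2
    have ht4 := smooth_Sop (-((k+1:ℕ):ℝ)) ht3
    have ht4' := smooth_Sop 1 ht3
    set G1 := Sop 0 (Sop (-(k:ℝ)) (Sop (1 - (k:ℝ)) (Sop (2 - (k:ℝ)) (iteratedDeriv k f))))
      with hG1def
    set G2 := Sop 0 (Sop 1 (Sop (1 - (k:ℝ)) (Sop (2 - (k:ℝ)) (iteratedDeriv k f))))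
      with hG2def
    have hsG1 : ContDiffOn ℝ (⊤ : ℕ∞) G1 (Set.Ioi 0) := smooth_Sop 0 hs4
    have hsG2 : ContDiffOn ℝ (⊤ : ℕ∞) G2 (Set.Ioi 0) := smooth_Sop 0 hs4'
    have hG1d : HasDerivAt G1 (iteratedDeriv 1 G1 x) x := by
      have h := (dAt hsG1 hx).hasDerivAt
      rwa [← iteratedDeriv_one] at h
    have hG2d : HasDerivAt G2 (iteratedDeriv 1 G2 x) x := by
      have h := (dAt hsG2 hx).hasDerivAt
      rwa [← iteratedDeriv_one] at h
    have hΦ : HasDerivAt (fun y : ℝ => y⁻¹ * G1 y + (y ^ 2)⁻¹ * G2 y)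
        ((-(x ^ 2)⁻¹) * G1 x + x⁻¹ * iteratedDeriv 1 G1 x
          + ((-(((2:ℕ):ℝ) * x ^ (2 - 1)) / (x ^ 2) ^ 2) * G2 x
            + (x ^ 2)⁻¹ * iteratedDeriv 1 G2 x)) x :=
      ((hasDerivAt_inv hx.ne').mul hG1d).add
        (((hasDerivAt_pow 2 x).inv (pow_ne_zero 2 hx.ne')).mul hG2d)
    have hev : iteratedDeriv k (Aop f) =ᶠ[nhds x]
        fun y : ℝ => y⁻¹ * G1 y + (y ^ 2)⁻¹ * G2 y :=
      Filter.eventuallyEq_of_mem (isOpen_Ioi.mem_nhds hx) fun y hy => ih y hy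
    rw [iteratedDeriv_succ, hev.deriv_eq, hΦ.deriv]
    simp only [hG1def, hG2def, Sop_val, L hs1, L hs2, L hs3, L hs4, L hs4',
      L ht1, L ht2, L ht3, L ht4, L ht4', iD_iD, hx]
    norm_num [Nat.add_assoc]
    field_simp
    ring
end
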